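/- Let A be a real m×n matrix, x, p ∈ ℝⁿ with p ≠ 0 and ⟪x - p, p⟫ = 0, and set b = A·x, u = p/‖p‖, d = (A·p)/‖p‖², and Ā = A·(I - u·uᵀ) (a rank-one modification of A whose rows are orthogonal to p). Assume Ā·Āᵀ is invertible and define v = (Ā·Āᵀ)⁻¹·(b - ⟪x, p⟫·d) ∈ ℝᵐ and q = p + Āᵀ·v. Then A·(x - q) = 0 and ⟪x - q, p⟫ = 0; consequently q is the orthogonal projection of x onto the subspace of ℝⁿ spanned by p together with the rows of A. -/

import Mathlib

open scoped RealInnerProductSpace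
open Matrix

/-! With `P = I - u uᵀ` the orthogonal projector onto `p^⊥`, `Ā = A P` kills `p`, so
`Āᵀ v = P (Aᵀ v)` is orthogonal to `p` and is fixed by `P`. Hence
`A (Āᵀ v) = Ā Āᵀ v = b - ⟪x, p⟫ d = A x - A p`, because `⟪x, p⟫ = ‖p‖²`; this gives
`A (x - q) = 0`, and `⟪x - q, p⟫ = ⟪x - p, p⟫ - ⟪Āᵀ v, p⟫ = 0`. Since
`q = p + Aᵀ v - ⟪u, Aᵀ v⟫ u` lies in `span {p} ⊔ ran Aᵀ` and `x - q` is orthogonal to `p` and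
to every row of `A`, `q` is the orthogonal projection of `x` onto that subspace. -/

lemma inner_smul_one_div_norm_sq_smul_map_self {E F : Type*} [NormedAddCommGroup E]
    [InnerProductSpace ℝ E] [AddCommGroup F] [Module ℝ F] (f : E →ₗ[ℝ] F) {x p : E}
    (h : ⟪x - p, p⟫ = 0) : ⟪x, p⟫ • (1 / ‖p‖ ^ 2) • f p = f p := by
  rcases eq_or_ne p 0 with rfl | hp
  · simp
  rw [inner_sub_left, sub_eq_zero, real_inner_self_eq_norm_sq] at h
  rw [h, smul_smul, mul_one_div_cancel (by positivity), one_smul]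

section

variable {ι : Type*} [Fintype ι]

lemma real_inner_eq_ofLp_dotProduct (a c : EuclideanSpace ℝ ι) : ⟪a, c⟫ = a.ofLp ⬝ᵥ c.ofLp := by
  rw [EuclideanSpace.inner_eq_star_dotProduct, star_trivial, dotProduct_comm]

lemma one_sub_vecMulVec_self_mulVec {R : Type*} [CommRing R] [DecidableEq ι] (u w : ι → R) :
    (1 - vecMulVec u u) *ᵥ w = w - (u ⬝ᵥ w) • u := by
  rw [sub_mulVec, one_mulVec, vecMulVec_mulVec, op_smul_eq_smul]

lemma one_sub_vecMulVec_normalize_mulVec_self [DecidableEq ι] (p : EuclideanSpace ℝ ι) :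
    (1 - vecMulVec ((1 / ‖p‖) • p).ofLp ((1 / ‖p‖) • p).ofLp) *ᵥ p.ofLp = 0 := by
  rcases eq_or_ne p 0 with rfl | hp
  · simp
  have hpp : p.ofLp ⬝ᵥ p.ofLp = ‖p‖ ^ 2 := by
    rw [← real_inner_eq_ofLp_dotProduct, real_inner_self_eq_norm_sq]
  have hp' : ‖p‖ ≠ 0 := norm_ne_zero_iff.mpr hp
  rw [one_sub_vecMulVec_self_mulVec, WithLp.ofLp_smul, smul_dotProduct, hpp, smul_eq_mul,
    smul_smul, show 1 / ‖p‖ * ‖p‖ ^ 2 * (1 / ‖p‖) = 1 by field_simp, one_smul, sub_self]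

lemma toLp_one_sub_vecMulVec_self_mulVec_mem_sup [DecidableEq ι]
    {S T : Submodule ℝ (EuclideanSpace ℝ ι)} {u : EuclideanSpace ℝ ι} {w : ι → ℝ} (hu : u ∈ S)
    (hw : WithLp.toLp 2 w ∈ T) : WithLp.toLp 2 ((1 - vecMulVec u.ofLp u.ofLp) *ᵥ w) ∈ S ⊔ T := by
  rw [one_sub_vecMulVec_self_mulVec, WithLp.toLp_sub, WithLp.toLp_smul, WithLp.toLp_ofLp]
  exact sub_mem (Submodule.mem_sup_right hw) (Submodule.mem_sup_left (Submodule.smul_mem _ _ hu))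

end

lemma dotProduct_transpose_mulVec_eq_zero {m n R : Type*} [Fintype m] [Fintype n] [CommSemiring R]
    {B : Matrix m n R} {w : n → R} (h : B *ᵥ w = 0) (v : m → R) : w ⬝ᵥ (Bᵀ *ᵥ v) = 0 := by
  rw [mulVec_transpose, dotProduct_comm, ← dotProduct_mulVec, h, dotProduct_zero]

lemma mulVec_mulVec_nonsing_inv_mulVec {m n K : Type*} [Fintype m] [DecidableEq m] [Fintype n]
    [CommRing K] {B : Matrix m n K} {C : Matrix n m K} (h : IsUnit (B * C)) (y : m → K) :
    B *ᵥ (C *ᵥ ((B * C)⁻¹ *ᵥ y)) = y := by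
  rw [mulVec_mulVec, mulVec_mulVec, mul_nonsing_inv _ ((isUnit_iff_isUnit_det _).mp h), one_mulVec]

lemma transpose_mul_one_sub_vecMulVec_self {m n R : Type*} [Fintype n] [DecidableEq n]
    [CommRing R] (A : Matrix m n R) (u : n → R) :
    (A * (1 - vecMulVec u u))ᵀ = (1 - vecMulVec u u) * Aᵀ := by
  rw [transpose_mul, transpose_sub, transpose_one, transpose_vecMulVec]

def euclideanRowSpace {m n : Type*} [Fintype n] (A : Matrix m n ℝ) :
    Submodule ℝ (EuclideanSpace ℝ n) :=
  Submodule.span ℝ (Set.range fun i => WithLp.toLp 2 (A i))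

section

variable {m n : Type*} [Fintype n]

lemma toLp_transpose_mulVec_mem_euclideanRowSpace [Fintype m] (A : Matrix m n ℝ) (v : m → ℝ) :
    WithLp.toLp 2 (Aᵀ *ᵥ v) ∈ euclideanRowSpace A := by
  rw [mulVec_transpose, vecMul_eq_sum]
  exact (Submodule.mem_span_range_iff_exists_fun ℝ).2 ⟨v, by simp⟩

lemma mem_orthogonal_span_singleton_sup_euclideanRowSpace {A : Matrix m n ℝ}
    {p y : EuclideanSpace ℝ n} (hp : ⟪y, p⟫ = 0) (hA : A *ᵥ y.ofLp = 0) :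
    y ∈ (ℝ ∙ p ⊔ euclideanRowSpace A)ᗮ := by
  rw [Submodule.mem_orthogonal']
  suffices ℝ ∙ p ⊔ euclideanRowSpace A ≤ LinearMap.ker (innerₛₗ ℝ y) from fun w hw => this hw
  refine sup_le ?_ (Submodule.span_le.2 ?_)
  · rwa [Submodule.span_singleton_le_iff_mem]
  · rintro _ ⟨i, rfl⟩
    rw [SetLike.mem_coe, LinearMap.mem_ker, innerₛₗ_apply_apply, real_inner_eq_ofLp_dotProduct,
      dotProduct_comm]
    exact congrFun hA i

end

theorem ap_rank_one_step_is_projection_general {m n : ℕ}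
    (A : Matrix (Fin m) (Fin n) ℝ)
    (x p : EuclideanSpace ℝ (Fin n))
    (horth : ⟪x - p, p⟫ = 0)
    (b : EuclideanSpace ℝ (Fin m)) (hb : b = A.mulVec x)
    (u : EuclideanSpace ℝ (Fin n)) (hu : u = (1 / ‖p‖) • p)
    (d : EuclideanSpace ℝ (Fin m)) (hd : d = (1 / ‖p‖ ^ 2) • (WithLp.toLp 2 (A.mulVec p) : EuclideanSpace ℝ (Fin m)))
    (Abar : Matrix (Fin m) (Fin n) ℝ) (hAbar : Abar = A * (1 - vecMulVec u u))
    (hinv : IsUnit (Abar * Abarᵀ))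
    (v : EuclideanSpace ℝ (Fin m)) (hv : v = (Abar * Abarᵀ)⁻¹.mulVec (b - ⟪x, p⟫ • d))
    (Atv : EuclideanSpace ℝ (Fin n)) (hAtv : Atv = Abarᵀ.mulVec v)
    (q : EuclideanSpace ℝ (Fin n)) (hq : q = p + Atv) :
    A.mulVec (x - q) = 0 ∧ ⟪x - q, p⟫ = 0 ∧
      (q ∈ Submodule.span ℝ {p} ⊔
          Submodule.span ℝ (Set.range fun i : Fin m => (WithLp.toLp 2 (A i) : EuclideanSpace ℝ (Fin n))) ∧
        ∀ w ∈ Submodule.span ℝ {p} ⊔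
            Submodule.span ℝ (Set.range fun i : Fin m => (WithLp.toLp 2 (A i) : EuclideanSpace ℝ (Fin n))),
          ⟪x - q, w⟫ = 0) := by
  have hAbar_p : Abar *ᵥ p = 0 := by
    rw [hAbar, ← mulVec_mulVec, hu, one_sub_vecMulVec_normalize_mulVec_self, mulVec_zero]
  have hAbar_u : Abar *ᵥ u = 0 := by
    rw [hu, WithLp.ofLp_smul, mulVec_smul, hAbar_p, smul_zero]
  have hAtv_p : ⟪Atv, p⟫ = 0 := by
    rw [real_inner_eq_ofLp_dotProduct, dotProduct_comm, hAtv,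
      dotProduct_transpose_mulVec_eq_zero hAbar_p]
  have hxp_d : ⟪x, p⟫ • d.ofLp = A *ᵥ p := by
    rw [hd, WithLp.ofLp_smul, WithLp.ofLp_toLp]
    exact inner_smul_one_div_norm_sq_smul_map_self
      (A.mulVecLin ∘ₗ (WithLp.linearEquiv 2 ℝ _).toLinearMap) horth
  have hA_Atv : A *ᵥ Atv = A *ᵥ x - A *ᵥ p := by
    have hP_Atv : (1 - vecMulVec u u) *ᵥ Atv = Atv := by
      rw [one_sub_vecMulVec_self_mulVec, hAtv, dotProduct_transpose_mulVec_eq_zero hAbar_u,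
        zero_smul, sub_zero]
    calc A *ᵥ Atv = Abar *ᵥ Atv := by rw [hAbar, ← mulVec_mulVec, hP_Atv]
      _ = b - ⟪x, p⟫ • d := by rw [hAtv, hv, mulVec_mulVec_nonsing_inv_mulVec hinv]
      _ = A *ᵥ x - A *ᵥ p := by rw [hb, hxp_d]
  have hAtv_mem : Atv ∈ ℝ ∙ p ⊔ euclideanRowSpace A := by
    have hu_mem : u ∈ ℝ ∙ p := hu ▸ Submodule.smul_mem _ _ (Submodule.mem_span_singleton_self p)
    rw [← WithLp.toLp_ofLp _ Atv, hAtv, hAbar, transpose_mul_one_sub_vecMulVec_self,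
      ← mulVec_mulVec]
    exact toLp_one_sub_vecMulVec_self_mulVec_mem_sup hu_mem
      (toLp_transpose_mulVec_mem_euclideanRowSpace A v)
  have hker : A *ᵥ (x - q) = 0 := by
    rw [hq, WithLp.ofLp_add, mulVec_sub, mulVec_add, hA_Atv]
    abel
  have hperp : ⟪x - q, p⟫ = 0 := by
    rw [hq, sub_add_eq_sub_sub, inner_sub_left, horth, hAtv_p, sub_zero]
  have hq_mem : q ∈ ℝ ∙ p ⊔ euclideanRowSpace A :=
    hq ▸ add_mem (Submodule.mem_sup_left (Submodule.mem_span_singleton_self p)) hAtv_mem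
  exact ⟨hker, hperp, hq_mem, (Submodule.mem_orthogonal' _ _).1
    (mem_orthogonal_span_singleton_sup_euclideanRowSpace hperp hker)⟩

/-- the vector `q = p + Āᵀ v` built via the rank-one-modified
matrix `Ā = A (I - u uᵀ)` satisfies `A (x - q) = 0` and `⟪x - q, p⟫ = 0`;
consequently `q` is the orthogonal projection of `x` onto `span{p} ⊔ ran(Aᵀ)`. -/
theorem ap_rank_one_step_is_projection {m n : ℕ}
    (A : Matrix (Fin m) (Fin n) ℝ)
    (x p : EuclideanSpace ℝ (Fin n)) (hp : p ≠ 0)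
    (horth : ⟪x - p, p⟫ = 0)
    (b : EuclideanSpace ℝ (Fin m)) (hb : b = A.mulVec x)
    (u : EuclideanSpace ℝ (Fin n)) (hu : u = (1 / ‖p‖) • p)
    (d : EuclideanSpace ℝ (Fin m)) (hd : d = (1 / ‖p‖ ^ 2) • (WithLp.toLp 2 (A.mulVec p) : EuclideanSpace ℝ (Fin m)))
    (Abar : Matrix (Fin m) (Fin n) ℝ) (hAbar : Abar = A * (1 - vecMulVec u u))
    (hinv : IsUnit (Abar * Abarᵀ))
    (v : EuclideanSpace ℝ (Fin m)) (hv : v = (Abar * Abarᵀ)⁻¹.mulVec (b - ⟪x, p⟫ • d))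
    (Atv : EuclideanSpace ℝ (Fin n)) (hAtv : Atv = Abarᵀ.mulVec v)
    (q : EuclideanSpace ℝ (Fin n)) (hq : q = p + Atv) :
    A.mulVec (x - q) = 0 ∧ ⟪x - q, p⟫ = 0 ∧
      (q ∈ Submodule.span ℝ {p} ⊔
          Submodule.span ℝ (Set.range fun i : Fin m => (WithLp.toLp 2 (A i) : EuclideanSpace ℝ (Fin n))) ∧
        ∀ w ∈ Submodule.span ℝ {p} ⊔
            Submodule.span ℝ (Set.range fun i : Fin m => (WithLp.toLp 2 (A i) : EuclideanSpace ℝ (Fin n))),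
          ⟪x - q, w⟫ = 0) :=
  ap_rank_one_step_is_projection_general A x p horth b hb u hu d hd Abar hAbar hinv v hv Atv hAtv q
    hq
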